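/- arXiv:hep-th/9807144 — 4 statements merged into one kernel-verified Lean document; each statement's English description precedes it below -/
import Mathlib

section
/- For all u, v both in NS^(m) (or both in R^(m)), the sum over w ∈ NS^(m) of S^(m)_{u,w} · S^(m)_{w,v} equals 1 if u = v* and 0 otherwise, where * denotes the conjugation (j,k)* = (k,j) for k ≠ 0 and (m-j,0) for k = 0. -/
open Complex Finset

/-- The modular S-matrix of the N=2 superconformal algebra at level `m`. -/
noncomputable def Smat (m : ℕ) (u v : ℝ × ℝ) : ℂ :=
  (2 / (m : ℂ)) * Complex.exp (Real.pi * Complex.I * (((u.1 - u.2) * (v.1 - v.2) / m : ℝ) : ℂ)) *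
    Complex.sin (((Real.pi * (u.1 + u.2) * (v.1 + v.2) / m : ℝ) : ℂ))

/-- The Neveu-Schwarz index set `NS^(m)`:
pairs of half-odd-integers `(j,k)` with `0 < j`, `0 < k`, `j + k < m`. -/
noncomputable def NSfin (m : ℕ) : Finset (ℝ × ℝ) :=
  ((Finset.range m ×ˢ Finset.range m).filter fun p => p.1 + p.2 + 1 < m).image
    fun p => ((p.1 : ℝ) + 1 / 2, (p.2 : ℝ) + 1 / 2)

/-- The Ramond index set `R^(m)`:
integer pairs `(j,k)` with `0 < j`, `0 < j + k < m`, `0 ≤ k < m`. -/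
noncomputable def Rfin (m : ℕ) : Finset (ℝ × ℝ) :=
  ((Finset.range m ×ˢ Finset.range m).filter fun p => 1 ≤ p.1 ∧ p.1 + p.2 < m).image
    fun p => ((p.1 : ℝ), (p.2 : ℝ))

/-- The full index set `A^(m) = NS^(m) ∪ R^(m)`. -/
noncomputable def Afin (m : ℕ) : Finset (ℝ × ℝ) := NSfin m ∪ Rfin m

/-- The conjugation `(j,k)* = (k,j)` if `k ≠ 0`, `(m-j, 0)` if `k = 0`. -/
noncomputable def conjA (m : ℕ) (u : ℝ × ℝ) : ℝ × ℝ :=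
  if u.2 = 0 then ((m : ℝ) - u.1, 0) else (u.2, u.1)

/-- `J(a,b) = ∑ e^{iaj} e^{ibk}` over integer pairs `(j,k)` with
`0 < k < m`, `-k < j < k` and `j + k` odd. -/
noncomputable def Jsum (m : ℕ) (a b : ℂ) : ℂ :=
  ∑ k ∈ Finset.Ioo (0 : ℤ) (m : ℤ),
    ∑ j ∈ (Finset.Ioo (-k) k).filter fun j => Odd (j + k),
      Complex.exp (Complex.I * a * j) * Complex.exp (Complex.I * b * k)

/-- `I(a,b) = J(a,b) + J(a,-b)`. -/
noncomputable def Isum (m : ℕ) (a b : ℂ) : ℂ := Jsum m a b + Jsum m a (-b)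

/-- The fusion coefficient `N_{u,u',u''}` given by the modified Verlinde formula. -/
noncomputable def Nfus (m : ℕ) (u u' u'' : ℝ × ℝ) : ℂ :=
  ∑ v ∈ NSfin m,
    Smat m u v * Smat m u' v * Smat m u'' v / Smat m (1 / 2, 1 / 2) v

/-- The fusion coefficient `N_{u,u'}^{u''}` (with conjugated third entry). -/
noncomputable def Ncof (m : ℕ) (u u' w : ℝ × ℝ) : ℂ :=
  ∑ v ∈ NSfin m,
    Smat m u v * Smat m u' v * (starRingEnd ℂ) (Smat m w v) / Smat m (1 / 2, 1 / 2) v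

/-- Membership in `𝔽^(m)`: an odd number of the three indices is of Neveu-Schwarz type. -/
def Fmem (m : ℕ) (u u' u'' : ℝ × ℝ) : Prop :=
  (u ∈ NSfin m ∧ u' ∈ NSfin m ∧ u'' ∈ NSfin m) ∨
  (u ∈ NSfin m ∧ u' ∈ Rfin m ∧ u'' ∈ Rfin m) ∨
  (u ∈ Rfin m ∧ u' ∈ NSfin m ∧ u'' ∈ Rfin m) ∨
  (u ∈ Rfin m ∧ u' ∈ Rfin m ∧ u'' ∈ NSfin m)

/-!
Put `ζ = exp(πi/m)`, a primitive `2m`-th root of unity, and describe a point `(j, k)` by the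
integers `A = j + k` and `B = j - k`, so that
`S_{u,w} = (i/m) ζ^{B_u B_w} (ζ^{-A_u A_w} - ζ^{A_u A_w})`.
The points `w` of `NS^(m)` form the triangle `0 < A_w < m`, `|B_w| < A_w`, `A_w + B_w` odd.
When `A_u + B_u + A_v + B_v` is even, the summand is unchanged by
`(A_w, B_w) ↦ (m - A_w, B_w + m)`, which carries the triangle onto its complement in
`{0 < A_w < m, A_w + B_w odd, B_w mod 2m}`. So twice the sum runs over a full period in `B_w`:
a geometric sum, which vanishes unless `m ∣ B_u + B_v`. The remaining geometric sums over `A_w`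
pick out `A_u = A_v, B_u + B_v = 0` or `A_u + A_v = m, B_u + B_v = m`, which is `u = v*`.
-/

theorem Finset.sum_rectangle_eq_two_nsmul_sum_triangle {M : Type*} [AddCommMonoid M] (N : ℕ)
    (F : ℕ → ℕ → M) (hF : ∀ n < N, ∀ k, F n (n + 1 + k) = F (N - 1 - n) k) :
    ∑ n ∈ range N, ∑ k ∈ range (N + 1), F n k =
      2 • ∑ n ∈ range N, ∑ k ∈ range (n + 1), F n k := by
  have hsplit : ∀ n ∈ range N, ∑ k ∈ range (N + 1), F n k =
      ∑ k ∈ range (n + 1), F n k + ∑ k ∈ range (N - n), F (N - 1 - n) k := by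
    intro n hn
    have hn : n < N := mem_range.1 hn
    rw [show N + 1 = n + 1 + (N - n) by omega, sum_range_add]
    simp_rw [hF n hn]
  have hreflect : ∑ n ∈ range N, ∑ k ∈ range (N - n), F (N - 1 - n) k =
      ∑ n ∈ range N, ∑ k ∈ range (n + 1), F n k := by
    rw [← sum_range_reflect (fun n => ∑ k ∈ range (n + 1), F n k)]
    refine sum_congr rfl fun n hn => ?_
    rw [show N - 1 - n + 1 = N - n by have := mem_range.1 hn; omega]
  rw [sum_congr rfl hsplit, sum_add_distrib, hreflect, two_nsmul]

theorem Int.dvd_iff_of_abs_lt_two_mul {d n : ℤ} (hd : 0 < d) (hn : |n| < 2 * d) :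
    d ∣ n ↔ n = -d ∨ n = 0 ∨ n = d := by
  constructor
  · rintro ⟨t, rfl⟩
    rw [abs_mul, abs_of_pos hd] at hn
    have ht := abs_lt.1 (lt_of_mul_lt_mul_left (hn.trans_eq (mul_comm 2 d)) hd.le)
    rcases (by omega : t = -1 ∨ t = 0 ∨ t = 1) with rfl | rfl | rfl <;> simp
  · rintro (rfl | rfl | rfl) <;> simp

namespace IsPrimitiveRoot

variable {K : Type*} [Field K] {ζ : K} {m : ℕ}

theorem pow_eq_neg_one_of_two_mul (hζ : IsPrimitiveRoot ζ (2 * m)) (hm : 0 < m) : ζ ^ m = -1 :=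
  (hζ.pow (by omega) (mul_comm 2 m)).eq_neg_one_of_two_right

theorem sum_range_zpow_mul (hζ : IsPrimitiveRoot ζ (2 * m)) {n : ℤ} (hn : Even n) :
    ∑ x ∈ range m, ζ ^ (x * n) = if (2 * m : ℤ) ∣ n then (m : K) else 0 := by
  obtain ⟨k, rfl⟩ := hn
  have hpow : (ζ ^ (k + k)) ^ m = 1 := by
    rw [← zpow_natCast, ← zpow_mul, hζ.zpow_eq_one_iff_dvd]
    exact ⟨k, by push_cast; ring⟩
  simp_rw [mul_comm _ (k + k), zpow_mul, zpow_natCast]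
  split_ifs with hdvd
  · simp [(hζ.zpow_eq_one_iff_dvd _).2 (by exact_mod_cast hdvd)]
  · have hne : ζ ^ (k + k) ≠ 1 := by
      rw [Ne, hζ.zpow_eq_one_iff_dvd]
      exact_mod_cast hdvd
    rw [geom_sum_eq hne, hpow, sub_self, zero_div]

theorem sum_triangle_zpow_mul (hζ : IsPrimitiveRoot ζ (2 * m)) (hm : 0 < m) (M : ℤ)
    (c : ℕ → K) (hc : ∀ n < m - 1, c (m - 2 - n) = ζ ^ (m * M) * c n) :
    2 * ∑ n ∈ range (m - 1), ∑ k ∈ range (n + 1), ζ ^ ((2 * k - n) * M) * c n =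
      (if (m : ℤ) ∣ M then (m : K) else 0) *
        ∑ n ∈ range (m - 1), ζ ^ (-(n * M)) * c n := by
  have h0 : ζ ≠ 0 := hζ.ne_zero (by omega)
  obtain ⟨N, rfl⟩ : ∃ N, m = N + 1 := ⟨m - 1, by omega⟩
  have hfold := sum_rectangle_eq_two_nsmul_sum_triangle N
    (fun n k => ζ ^ ((2 * k - n) * M) * c n) (fun n hn k => by
      have hcn := hc n (by omega)
      rw [show N + 1 - 2 - n = N - 1 - n by omega] at hcn
      rw [hcn, Nat.cast_sub (by omega), Nat.cast_sub (by omega), ← mul_assoc, ← zpow_add₀ h0]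
      push_cast
      ring_nf)
  have hrow : ∀ n ∈ range N, ∑ k ∈ range (N + 1), ζ ^ ((2 * k - n) * M) * c n =
      (if ((N + 1 : ℕ) : ℤ) ∣ M then ((N + 1 : ℕ) : K) else 0) *
        (ζ ^ (-(n * M)) * c n) := by
    intro n _
    have hgeom := hζ.sum_range_zpow_mul (even_two_mul M)
    simp only [mul_dvd_mul_iff_left (two_ne_zero' ℤ)] at hgeom
    rw [← hgeom, sum_mul]
    refine sum_congr rfl fun k _ => ?_
    rw [← mul_assoc, ← zpow_add₀ h0]
    ring_nf
  simp only [Nat.add_sub_cancel]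
  rw [two_mul, ← two_nsmul, ← hfold, sum_congr rfl hrow, mul_sum]

theorem reflect_zpow_sub_zpow_neg (hζ : IsPrimitiveRoot ζ (2 * m)) (hm : 0 < m) (A x : ℤ) :
    ζ ^ ((m - x) * A) - ζ ^ (-((m - x) * A)) =
      -ζ ^ (m * A) * (ζ ^ (x * A) - ζ ^ (-(x * A))) := by
  have h0 : ζ ≠ 0 := hζ.ne_zero (by omega)
  have hsq : ζ ^ (-(m * A)) = ζ ^ (m * A) := by
    rw [zpow_neg]
    refine inv_eq_of_mul_eq_one_right ?_
    rw [← zpow_add₀ h0, hζ.zpow_eq_one_iff_dvd]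
    exact ⟨A, by push_cast; ring⟩
  rw [show (m - x) * A = m * A + -(x * A) by ring,
    show -(m * A + -(x * A)) = -(m * A) + x * A by ring, zpow_add₀ h0, zpow_add₀ h0, hsq]
  ring

theorem reflect_zpow_sub_zpow_neg_mul (hζ : IsPrimitiveRoot ζ (2 * m)) (hm : 0 < m)
    {A P M : ℤ} (hpar : Even (A + P + M)) (x : ℤ) :
    (ζ ^ ((m - x) * A) - ζ ^ (-((m - x) * A))) * (ζ ^ ((m - x) * P) - ζ ^ (-((m - x) * P))) =
      ζ ^ (m * M) * ((ζ ^ (x * A) - ζ ^ (-(x * A))) * (ζ ^ (x * P) - ζ ^ (-(x * P)))) := by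
  have h0 : ζ ≠ 0 := hζ.ne_zero (by omega)
  obtain ⟨r, hr⟩ := hpar
  have hζAP : ζ ^ (m * A) * ζ ^ (m * P) = ζ ^ (m * M) := by
    rw [← zpow_add₀ h0, show m * A + m * P = (2 * m : ℕ) * (r - M) + m * M by
      push_cast; linear_combination (m : ℤ) * hr, zpow_add₀ h0,
      (hζ.zpow_eq_one_iff_dvd _).2 (dvd_mul_right _ _), one_mul]
  rw [hζ.reflect_zpow_sub_zpow_neg hm, hζ.reflect_zpow_sub_zpow_neg hm, ← hζAP]
  ring

theorem sum_range_zpow_mul_mul (hζ : IsPrimitiveRoot ζ (2 * m)) (hm : 0 < m) {A P M : ℤ}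
    (hpar : Even (A + P + M)) :
    ∑ x ∈ range m, ζ ^ (-(x * M)) *
        ((ζ ^ (x * A) - ζ ^ (-(x * A))) * (ζ ^ (x * P) - ζ ^ (-(x * P)))) =
      (if (2 * m : ℤ) ∣ A + P - M then (m : K) else 0) -
        (if (2 * m : ℤ) ∣ A - P - M then (m : K) else 0) -
        (if (2 * m : ℤ) ∣ -A + P - M then (m : K) else 0) +
        (if (2 * m : ℤ) ∣ -A - P - M then (m : K) else 0) := by
  have h0 : ζ ≠ 0 := hζ.ne_zero (by omega)
  have heven (n : ℤ) (hn : Even (n - (A + P + M))) : Even n := by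
    simpa [Int.even_sub, hpar] using hn
  rw [← hζ.sum_range_zpow_mul (heven _ ⟨-M, by ring⟩),
    ← hζ.sum_range_zpow_mul (heven _ ⟨-(P + M), by ring⟩),
    ← hζ.sum_range_zpow_mul (heven _ ⟨-(A + M), by ring⟩),
    ← hζ.sum_range_zpow_mul (heven _ ⟨-(A + P + M), by ring⟩),
    ← sum_sub_distrib, ← sum_sub_distrib, ← sum_add_distrib]
  refine sum_congr rfl fun x _ => ?_
  simp only [mul_sub, sub_mul, ← zpow_add₀ h0]
  ring_nf

theorem mul_zpow_mul_sum_range_eq_ite (hζ : IsPrimitiveRoot ζ (2 * m)) {A P M : ℤ}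
    (hpar : Even (A + P + M)) (hA : 0 < A) (hAm : A < m) (hP : 0 < P) (hPm : P < m)
    (hM : -(A + P) < M) (hMm : M ≤ A + P) :
    (if (m : ℤ) ∣ M then (m : K) else 0) * (ζ ^ M * ∑ x ∈ range m, ζ ^ (-(x * M)) *
      ((ζ ^ (x * A) - ζ ^ (-(x * A))) * (ζ ^ (x * P) - ζ ^ (-(x * P))))) =
      -2 * m ^ 2 * if (A = P ∧ M = 0) ∨ (A + P = m ∧ M = m) then 1 else 0 := by
  have hm : 0 < m := by omega
  have hζm : ζ ^ (m : ℤ) = -1 := by rw [zpow_natCast, hζ.pow_eq_neg_one_of_two_mul hm]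
  have hζm' : ζ ^ (-(m : ℤ)) = -1 := by rw [zpow_neg, hζm, inv_neg, inv_one]
  rw [hζ.sum_range_zpow_mul_mul hm hpar]
  by_cases hdvd : (m : ℤ) ∣ M
  · rw [Int.dvd_iff_of_abs_lt_two_mul (by omega) (abs_lt.2 ⟨by omega, by omega⟩)] at hdvd
    rcases hdvd with rfl | rfl | rfl
    all_goals
      simp (disch := first | omega | (apply abs_lt.2; constructor <;> omega)) only
        [Int.dvd_iff_of_abs_lt_two_mul, hζm, hζm', zpow_zero, dvd_refl, dvd_neg, dvd_zero,
          if_true, sub_zero, and_true]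
      split_ifs <;> first | omega | ring
  · have hδ : ¬((A = P ∧ M = 0) ∨ (A + P = m ∧ M = m)) := by
      rintro (⟨_, rfl⟩ | ⟨_, rfl⟩)
      exacts [hdvd (dvd_zero _), hdvd dvd_rfl]
    rw [if_neg hdvd, if_neg hδ]
    ring

end IsPrimitiveRoot

noncomputable def ζ (m : ℕ) : ℂ := Complex.exp (Real.pi * Complex.I / m)

theorem isPrimitiveRoot_ζ {m : ℕ} (hm : 0 < m) : IsPrimitiveRoot (ζ m) (2 * m) := by
  unfold ζ
  convert Complex.isPrimitiveRoot_exp (2 * m) (by omega) using 2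
  push_cast
  field_simp

theorem ζ_zpow_eq_exp (m : ℕ) (n : ℤ) :
    ζ m ^ n = Complex.exp (Real.pi * Complex.I * n / m) := by
  rw [ζ, ← Complex.exp_int_mul]
  ring_nf

theorem Smat_eq_zpow {m : ℕ} {u w : ℝ × ℝ} {A B a b : ℤ} (hu₁ : u.1 + u.2 = A)
    (hu₂ : u.1 - u.2 = B) (hw₁ : w.1 + w.2 = a) (hw₂ : w.1 - w.2 = b) :
    Smat m u w = Complex.I / m * ζ m ^ (B * b) * (ζ m ^ (-(A * a)) - ζ m ^ (A * a)) := by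
  rw [Smat, Complex.sin, hu₁, hu₂, hw₁, hw₂, ζ_zpow_eq_exp, ζ_zpow_eq_exp, ζ_zpow_eq_exp]
  push_cast
  ring_nf

theorem Smat_mul_Smat_eq {m : ℕ} {u w v : ℝ × ℝ} {A B a b P Q : ℤ} (hu₁ : u.1 + u.2 = A)
    (hu₂ : u.1 - u.2 = B) (hw₁ : w.1 + w.2 = a) (hw₂ : w.1 - w.2 = b) (hv₁ : v.1 + v.2 = P)
    (hv₂ : v.1 - v.2 = Q) :
    Smat m u w * Smat m w v = -(1 / (m : ℂ) ^ 2) * (ζ m ^ (b * (B + Q)) *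
      ((ζ m ^ (a * A) - ζ m ^ (-(a * A))) * (ζ m ^ (a * P) - ζ m ^ (-(a * P))))) := by
  have h0 : ζ m ≠ 0 := Complex.exp_ne_zero _
  rw [Smat_eq_zpow hu₁ hu₂ hw₁ hw₂, Smat_eq_zpow hw₁ hw₂ hv₁ hv₂, mul_add,
    zpow_add₀ h0]
  ring_nf
  rw [Complex.I_sq]
  ring

theorem sum_NSfin {β : Type*} [AddCommMonoid β] (m : ℕ) (f : ℝ × ℝ → β) :
    ∑ w ∈ NSfin m, f w = ∑ n ∈ range (m - 1), ∑ k ∈ range (n + 1),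
      f ((k : ℝ) + 1 / 2, ((n - k : ℕ) : ℝ) + 1 / 2) := by
  rw [NSfin, sum_image, sum_sigma']
  · refine sum_nbij' (fun p => ⟨p.1 + p.2, p.1⟩) (fun x => (x.2, x.1 - x.2)) ?_ ?_ ?_ ?_ ?_
    all_goals
      rintro ⟨n, k⟩ hx
      simp only [mem_filter, mem_product, mem_range, mem_sigma] at hx ⊢
    · omega
    · omega
    · simp only [Nat.add_sub_cancel_left]
    · rw [Nat.add_sub_cancel' (Nat.lt_succ_iff.mp hx.2)]
    · simp only [Nat.add_sub_cancel_left]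
  · intro x _ y _ hxy
    simp only [Prod.mk.injEq, add_left_inj, Nat.cast_inj] at hxy
    exact Prod.ext hxy.1 hxy.2

theorem sum_Smat_mul_Smat {m : ℕ} (hm : 0 < m) {u v : ℝ × ℝ} {A B P Q : ℤ}
    (hu₁ : u.1 + u.2 = A) (hu₂ : u.1 - u.2 = B) (hv₁ : v.1 + v.2 = P) (hv₂ : v.1 - v.2 = Q)
    (hpar : Even (A + P + (B + Q))) :
    ∑ w ∈ NSfin m, Smat m u w * Smat m w v =
      -(1 / (2 * (m : ℂ) ^ 2)) * ((if (m : ℤ) ∣ B + Q then (m : ℂ) else 0) *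
        (ζ m ^ (B + Q) * ∑ x ∈ range m, ζ m ^ (-(x * (B + Q))) *
          ((ζ m ^ (x * A) - ζ m ^ (-(x * A))) * (ζ m ^ (x * P) - ζ m ^ (-(x * P)))))) := by
  have hζ := isPrimitiveRoot_ζ hm
  have h0 : ζ m ≠ 0 := hζ.ne_zero (by omega)
  set M := B + Q
  set c : ℕ → ℂ := fun n => (ζ m ^ ((n + 1 : ℤ) * A) - ζ m ^ (-((n + 1 : ℤ) * A))) *
    (ζ m ^ ((n + 1 : ℤ) * P) - ζ m ^ (-((n + 1 : ℤ) * P))) with hc_def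
  have hc : ∀ n < m - 1, c (m - 2 - n) = ζ m ^ (m * M) * c n := by
    intro n hn
    simp only [hc_def]
    rw [show ((m - 2 - n : ℕ) + 1 : ℤ) = m - (n + 1) by omega,
      hζ.reflect_zpow_sub_zpow_neg_mul hm hpar]
  have hterm : ∀ n k : ℕ, k < n + 1 →
      Smat m u ((k : ℝ) + 1 / 2, ((n - k : ℕ) : ℝ) + 1 / 2) *
        Smat m ((k : ℝ) + 1 / 2, ((n - k : ℕ) : ℝ) + 1 / 2) v =
      -(1 / (m : ℂ) ^ 2) * (ζ m ^ ((2 * k - n : ℤ) * M) * c n) := by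
    intro n k hk
    have hkn : ((n - k : ℕ) : ℝ) = n - k := Nat.cast_sub (Nat.lt_succ_iff.1 hk)
    rw [Smat_mul_Smat_eq hu₁ hu₂ (a := n + 1) (b := 2 * k - n) (by push_cast [hkn]; ring)
      (by push_cast [hkn]; ring) hv₁ hv₂]
  have hshift : ∑ n ∈ range (m - 1), ζ m ^ (-(n * M)) * c n = ζ m ^ M *
      ∑ x ∈ range m, ζ m ^ (-(x * M)) *
        ((ζ m ^ (x * A) - ζ m ^ (-(x * A))) * (ζ m ^ (x * P) - ζ m ^ (-(x * P)))) := by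
    obtain ⟨N, rfl⟩ : ∃ N, m = N + 1 := ⟨m - 1, by omega⟩
    rw [sum_range_succ', mul_add, mul_sum, Nat.add_sub_cancel]
    simp only [hc_def, Nat.cast_zero, zero_mul, neg_zero, zpow_zero, sub_self, mul_zero,
      add_zero]
    refine sum_congr rfl fun n _ => ?_
    push_cast
    simp only [← mul_assoc, ← zpow_add₀ h0]
    ring_nf
  calc ∑ w ∈ NSfin m, Smat m u w * Smat m w v
      = -(1 / (2 * (m : ℂ) ^ 2)) * (2 * ∑ n ∈ range (m - 1), ∑ k ∈ range (n + 1),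
          ζ m ^ ((2 * k - n : ℤ) * M) * c n) := by
        rw [sum_NSfin, mul_sum, mul_sum]
        refine sum_congr rfl fun n _ => ?_
        rw [mul_sum, mul_sum]
        refine sum_congr rfl fun k hk => ?_
        rw [hterm n k (mem_range.1 hk)]
        field_simp
    _ = _ := by rw [hζ.sum_triangle_zpow_mul hm M c hc, hshift]

theorem eq_conjA_iff {m : ℕ} {u v : ℝ × ℝ} (hu₁ : 0 < u.1) (hu₂ : 0 ≤ u.2)
    (hv : 0 ≤ v.2) :
    u = conjA m v ↔ (u.1 + u.2 = v.1 + v.2 ∧ u.1 - u.2 + (v.1 - v.2) = 0) ∨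
      (u.1 + u.2 + (v.1 + v.2) = m ∧ u.1 - u.2 + (v.1 - v.2) = m) := by
  unfold conjA
  split_ifs with hv0
  · simp only [Prod.ext_iff]
    constructor
    · rintro ⟨h₁, h₂⟩
      exact Or.inr ⟨by linarith, by linarith⟩
    · rintro (⟨h₁, h₂⟩ | ⟨h₁, h₂⟩)
      · linarith
      · exact ⟨by linarith, by linarith⟩
  · have hv' : 0 < v.2 := lt_of_le_of_ne hv (Ne.symm hv0)
    simp only [Prod.ext_iff]
    constructor
    · rintro ⟨h₁, h₂⟩
      exact Or.inl ⟨by linarith, by linarith⟩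
    · rintro (⟨h₁, h₂⟩ | ⟨h₁, h₂⟩)
      · exact ⟨by linarith, by linarith⟩
      · linarith

def SumDiffCoords (m : ℕ) (u : ℝ × ℝ) (A B : ℤ) : Prop :=
  u.1 + u.2 = A ∧ u.1 - u.2 = B ∧ 0 < A ∧ A < m ∧ -A < B ∧ B ≤ A

theorem exists_sumDiffCoords_of_mem_NSfin {m : ℕ} {u : ℝ × ℝ} (hu : u ∈ NSfin m) :
    ∃ A B : ℤ, SumDiffCoords m u A B ∧ Odd (A + B) := by
  obtain ⟨⟨p, q⟩, hpq, rfl⟩ := mem_image.1 hu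
  simp only [mem_filter, mem_product, mem_range] at hpq
  exact ⟨p + q + 1, (p : ℤ) - q, ⟨by push_cast; ring, by push_cast; ring, by omega, by omega,
    by omega, by omega⟩, ⟨p, by ring⟩⟩

theorem exists_sumDiffCoords_of_mem_Rfin {m : ℕ} {u : ℝ × ℝ} (hu : u ∈ Rfin m) :
    ∃ A B : ℤ, SumDiffCoords m u A B ∧ Even (A + B) := by
  obtain ⟨⟨j, k⟩, hjk, rfl⟩ := mem_image.1 hu
  simp only [mem_filter, mem_product, mem_range] at hjk
  exact ⟨j + k, (j : ℤ) - k, ⟨by push_cast; ring, by push_cast; ring, by omega, by omega,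
    by omega, by omega⟩, ⟨j, by ring⟩⟩

theorem sum_Smat_mul_Smat_eq_ite {m : ℕ} (hm : 0 < m) {u v : ℝ × ℝ} {A B P Q : ℤ}
    (hu : SumDiffCoords m u A B) (hv : SumDiffCoords m v P Q) (hpar : Even (A + P + (B + Q))) :
    ∑ w ∈ NSfin m, Smat m u w * Smat m w v = if u = conjA m v then 1 else 0 := by
  obtain ⟨hu₁, hu₂, hA, hAm, hB, hBA⟩ := hu
  obtain ⟨hv₁, hv₂, hP, hPm, hQ, hQP⟩ := hv
  have hm' : (m : ℂ) ≠ 0 := by exact_mod_cast hm.ne'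
  have hconj : u = conjA m v ↔ (A = P ∧ B + Q = 0) ∨ (A + P = m ∧ B + Q = m) := by
    have hB' : (-A : ℝ) < B := by exact_mod_cast hB
    have hBA' : (B : ℝ) ≤ A := by exact_mod_cast hBA
    have hQP' : (Q : ℝ) ≤ P := by exact_mod_cast hQP
    rw [eq_conjA_iff (by linarith) (by linarith) (by linarith), hu₁, hu₂, hv₁, hv₂]
    norm_cast
  rw [sum_Smat_mul_Smat hm hu₁ hu₂ hv₁ hv₂ hpar,
    (isPrimitiveRoot_ζ hm).mul_zpow_mul_sum_range_eq_ite hpar hA hAm hP hPm (by omega)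
      (by omega), if_congr hconj rfl rfl]
  field_simp

theorem Smat_unitarity (m : ℕ) (hm : 0 < m) (u v : ℝ × ℝ)
    (h : (u ∈ NSfin m ∧ v ∈ NSfin m) ∨ (u ∈ Rfin m ∧ v ∈ Rfin m)) :
    ∑ w ∈ NSfin m, Smat m u w * Smat m w v
      = if u = conjA m v then 1 else 0 := by
  rcases h with ⟨hu, hv⟩ | ⟨hu, hv⟩
  · obtain ⟨A, B, hAB, hodd⟩ := exists_sumDiffCoords_of_mem_NSfin hu
    obtain ⟨P, Q, hPQ, hodd'⟩ := exists_sumDiffCoords_of_mem_NSfin hv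
    exact sum_Smat_mul_Smat_eq_ite hm hAB hPQ (by rw [add_add_add_comm]; exact hodd.add_odd hodd')
  · obtain ⟨A, B, hAB, heven⟩ := exists_sumDiffCoords_of_mem_Rfin hu
    obtain ⟨P, Q, hPQ, heven'⟩ := exists_sumDiffCoords_of_mem_Rfin hv
    exact sum_Smat_mul_Smat_eq_ite hm hAB hPQ (by rw [add_add_add_comm]; exact heven.add heven')
end

section
/- If e^{ia} = 1 and e^{ib} ≠ 1, then J(a,b) = (1-m) · e^{ibm}/(1-e^{ib}) + (e^{ib} - e^{ibm})/(1-e^{ib})². -/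
/-!
If `e^{ia} = 1`, every summand of `J(a,b)` in row `k` equals `x^k` with `x = e^{ib}`, and row `k`
has exactly `k` entries, so `J(a,b) = ∑_{k<m} k x^k`. Multiplying this arithmetico-geometric sum
by `(1 - x)^2` telescopes to `x - m x^m + (m - 1) x^{m+1}`.
-/

open Complex Finset

theorem card_filter_odd_add_Ioo_neg (k : ℤ) :
    #{j ∈ Ioo (-k) k | Odd (j + k)} = k.toNat := by
  -- the admissible `j` are `k - 1, k - 3, …, 1 - k`
  have h : {j ∈ Ioo (-k) k | Odd (j + k)}
      = (range k.toNat).image fun i : ℕ => k - 1 - 2 * (i : ℤ) := by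
    ext j
    simp only [mem_filter, mem_Ioo, mem_image, mem_range, Int.odd_iff]
    constructor
    · rintro ⟨⟨hlo, hhi⟩, hodd⟩
      exact ⟨(k - 1 - j).toNat / 2, by omega, by omega⟩
    · rintro ⟨i, hi, rfl⟩
      omega
  rw [h, card_image_of_injective _ fun i i' hii => by omega, card_range]

theorem sum_Ioo_int_eq_sum_range {M : Type*} [AddCommMonoid M] (f : ℤ → M) (hf : f 0 = 0)
    (n : ℕ) : ∑ k ∈ Ioo (0 : ℤ) n, f k = ∑ k ∈ range n, f k := by
  rw [← sum_subset (fun k hk => by simp at hk ⊢; omega : Ioo 0 n ⊆ range n)]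
  · refine sum_nbij' Int.toNat Nat.cast ?_ ?_ ?_ ?_ ?_ <;> intro k hk <;> simp at hk ⊢ <;> grind
  · intro k hk hk'
    obtain rfl : k = 0 := by simp at hk hk'; omega
    simpa using hf

theorem sum_range_natCast_mul_pow_mul_one_sub_sq {R : Type*} [CommRing R] (x : R) (n : ℕ) :
    (∑ k ∈ range n, (k : R) * x ^ k) * (1 - x) ^ 2 = x - n * x ^ n + (n - 1) * x ^ (n + 1) := by
  induction n with
  | zero => simp
  | succ n ih =>
    rw [sum_range_succ, add_mul, ih]
    push_cast
    ring

theorem sum_range_natCast_mul_pow {K : Type*} [Field K] {x : K} (hx : x ≠ 1) (n : ℕ) :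
    ∑ k ∈ range n, (k : K) * x ^ k
      = (1 - n) * x ^ n / (1 - x) + (x - x ^ n) / (1 - x) ^ 2 := by
  have hx' : 1 - x ≠ 0 := sub_ne_zero.mpr hx.symm
  rw [div_add_div _ _ hx' (pow_ne_zero 2 hx'), eq_div_iff (mul_ne_zero hx' (pow_ne_zero 2 hx'))]
  linear_combination (1 - x) * sum_range_natCast_mul_pow_mul_one_sub_sq x n

theorem Jsum_of_exp_eq_one (m : ℕ) {a : ℂ} (ha : exp (I * a) = 1) (b : ℂ) :
    Jsum m a b = ∑ k ∈ range m, (k : ℂ) * exp (I * b) ^ k := by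
  have exp_a (j : ℤ) : exp (I * a * j) = 1 := by rw [mul_comm, exp_int_mul, ha, one_zpow]
  simp only [Jsum, exp_a, one_mul, sum_const, card_filter_odd_add_Ioo_neg, nsmul_eq_mul]
  rw [sum_Ioo_int_eq_sum_range _ (by simp)]
  refine sum_congr rfl fun k _ => ?_
  rw [Int.toNat_natCast, ← exp_nat_mul, Int.cast_natCast, mul_comm (k : ℂ) (I * b)]

theorem Jsum_one_ne_one_general (m : ℕ) (a b : ℂ)
    (ha : Complex.exp (Complex.I * a) = 1) (hb : Complex.exp (Complex.I * b) ≠ 1) :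
    Jsum m a b
      = (1 - m) * Complex.exp (Complex.I * b * m) / (1 - Complex.exp (Complex.I * b)) +
        (Complex.exp (Complex.I * b) - Complex.exp (Complex.I * b * m)) /
          (1 - Complex.exp (Complex.I * b)) ^ 2 := by
  rw [Jsum_of_exp_eq_one m ha, sum_range_natCast_mul_pow hb, mul_comm (I * b), exp_nat_mul]

theorem Jsum_one_ne_one (m : ℕ) (hm : 0 < m) (a b : ℂ)
    (ha : Complex.exp (Complex.I * a) = 1) (hb : Complex.exp (Complex.I * b) ≠ 1) :
    Jsum m a b
      = (1 - m) * Complex.exp (Complex.I * b * m) / (1 - Complex.exp (Complex.I * b)) +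
        (Complex.exp (Complex.I * b) - Complex.exp (Complex.I * b * m)) /
          (1 - Complex.exp (Complex.I * b)) ^ 2 :=
  Jsum_one_ne_one_general m a b ha hb
end

section
/- Let a, b ∈ (π/m)ℤ with e^{ia} ≠ ±1, e^{i(a+b)} ≠ 1, and e^{i(a-b)} ≠ 1. Then I(a,b) = (1 - e^{i(a+b)m})/(e^{ia} - e^{-ia}) · [ (1+e^{i(a+b)})/(1-e^{i(a+b)}) + (1+e^{i(a-b)})/(1-e^{i(a-b)}) ]. -/
open Complex Finset

/-!
With `w = e^{ia}` and `z = e^{ib}`, the inner sum over `j` runs over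
`w^{-k+1}, w^{-k+3}, …, w^{k-1}` and telescopes after multiplication by `w - w⁻¹` to
`w^k - w^{-k}`. Putting `u = e^{i(a+b)} = wz` and `v = e^{i(a-b)} = w/z`, this gives
`(w - w⁻¹) I(a,b) = D(u) + D(v)` with `D(x) = ∑_{0<k<m} (x^k - x^{-k})`. For `a, b ∈ (π/m)ℤ`
one has `u^m = v^m = ε` with `ε² = 1`, so also `x^{-m} = ε`, and summing the two geometric
series gives `(1 - x) D(x) = (1 - ε)(1 + x)`.
-/

theorem filter_odd_Ioo_neg_eq_image (k : ℤ) (hk : 0 ≤ k) :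
    {j ∈ Ioo (-k) k | Odd (j + k)} =
      (range k.toNat).image fun t : ℕ => 2 * (t : ℤ) - k + 1 := by
  ext j
  simp only [mem_filter, mem_Ioo, mem_image, mem_range, Int.odd_iff]
  constructor
  · rintro ⟨⟨h1, h2⟩, h3⟩
    exact ⟨((j + k - 1) / 2).toNat, by omega, by omega⟩
  · rintro ⟨t, ht, rfl⟩
    omega

section Field

variable {K : Type*} [Field K]

theorem sub_inv_ne_zero {w : K} (hw0 : w ≠ 0) (h1 : w ≠ 1) (h2 : w ≠ -1) :
    w - w⁻¹ ≠ 0 := by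
  intro h
  have : (w - 1) * (w + 1) = 0 := by
    linear_combination w * h + mul_inv_cancel₀ hw0
  rcases mul_eq_zero.1 this with h | h
  · exact h1 (sub_eq_zero.1 h)
  · exact h2 (eq_neg_of_add_eq_zero_left h)

theorem sub_inv_mul_sum_filter_odd_zpow {w : K} (hw : w ≠ 0) (k : ℤ) (hk : 0 ≤ k) :
    (w - w⁻¹) * ∑ j ∈ Ioo (-k) k with Odd (j + k), w ^ j = w ^ k - w⁻¹ ^ k := by
  have step (t : ℕ) : (w - w⁻¹) * w ^ (2 * (t : ℤ) - k + 1) =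
      w ^ (2 * ((t + 1 : ℕ) : ℤ) - k) - w ^ (2 * (t : ℤ) - k) := by
    rw [sub_mul, ← zpow_neg_one, ← zpow_one_add₀ hw, ← zpow_add₀ hw]
    push_cast
    ring_nf
  rw [filter_odd_Ioo_neg_eq_image k hk, sum_image (fun s _ t _ h => by simpa using h), mul_sum]
  simp only [step]
  rw [sum_range_sub (fun t : ℕ => w ^ (2 * (t : ℤ) - k)), Int.toNat_of_nonneg hk, inv_zpow',
    Nat.cast_zero]
  ring_nf

theorem one_sub_mul_sum_Ioo_zpow (x : K) {n : ℕ} (hn : 0 < n) :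
    (1 - x) * ∑ k ∈ Ioo (0 : ℤ) n, x ^ k = x - x ^ n := by
  have hsum : ∑ k ∈ Ioo (0 : ℤ) n, x ^ k = x * ∑ t ∈ range (n - 1), x ^ t := by
    rw [Int.Ioo_eq_finset_map, sum_map, mul_sum]
    refine sum_congr (by congr 2; omega) fun t _ => ?_
    rw [← pow_succ', ← zpow_natCast]
    simp [add_comm]
  rw [hsum, mul_left_comm, mul_neg_geom_sum, mul_sub, mul_one, ← pow_succ', Nat.sub_add_cancel hn]

theorem sum_Ioo_zpow_sub_inv_zpow {x : K} (hx0 : x ≠ 0) (hx1 : x ≠ 1) {n : ℕ} (hn : 0 < n)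
    (hxn : (x ^ n) ^ 2 = 1) :
    ∑ k ∈ Ioo (0 : ℤ) n, (x ^ k - x⁻¹ ^ k) = (1 - x ^ n) * ((1 + x) / (1 - x)) := by
  have hS := one_sub_mul_sum_Ioo_zpow x hn
  have hS' := one_sub_mul_sum_Ioo_zpow x⁻¹ hn
  rw [inv_pow, inv_eq_of_mul_eq_one_right (a := x ^ n) (b := x ^ n) (by rw [← sq, hxn])] at hS'
  rw [sum_sub_distrib, mul_div_assoc', eq_div_iff (sub_ne_zero.2 hx1.symm)]
  linear_combination
    hS + x * hS' + (∑ k ∈ Ioo (0 : ℤ) n, x⁻¹ ^ k + 1) * mul_inv_cancel₀ hx0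

end Field

theorem sub_inv_mul_Jsum (m : ℕ) (a b : ℂ) :
    (exp (I * a) - (exp (I * a))⁻¹) * Jsum m a b =
      ∑ k ∈ Ioo (0 : ℤ) m,
        ((exp (I * a) * exp (I * b)) ^ k - ((exp (I * a))⁻¹ * exp (I * b)) ^ k) := by
  rw [Jsum, mul_sum]
  refine sum_congr rfl fun k hk => ?_
  have hexp (c : ℂ) (n : ℤ) : exp (I * c * n) = exp (I * c) ^ n := by
    rw [mul_comm, exp_int_mul]
  simp only [hexp, ← sum_mul, ← mul_assoc]
  rw [sub_inv_mul_sum_filter_odd_zpow (exp_ne_zero _) k (mem_Ioo.1 hk).1.le, mul_zpow, mul_zpow,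
    sub_mul]

theorem sub_inv_mul_Isum (m : ℕ) (a b : ℂ) :
    (exp (I * a) - (exp (I * a))⁻¹) * Isum m a b =
      ∑ k ∈ Ioo (0 : ℤ) m, (exp (I * (a + b)) ^ k - (exp (I * (a + b)))⁻¹ ^ k) +
      ∑ k ∈ Ioo (0 : ℤ) m, (exp (I * (a - b)) ^ k - (exp (I * (a - b)))⁻¹ ^ k) := by
  have hadd : exp (I * (a + b)) = exp (I * a) * exp (I * b) := by rw [mul_add, exp_add]
  have hsub : exp (I * (a - b)) = exp (I * a) * (exp (I * b))⁻¹ := by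
    rw [mul_sub, exp_sub, div_eq_mul_inv]
  have hneg : exp (I * -b) = (exp (I * b))⁻¹ := by rw [mul_neg, exp_neg]
  rw [Isum, mul_add, sub_inv_mul_Jsum, sub_inv_mul_Jsum, hadd, hsub, hneg, ← sum_add_distrib,
    ← sum_add_distrib]
  refine sum_congr rfl fun k _ => ?_
  simp only [mul_inv, inv_inv]
  ring

theorem exp_I_mul_pow_sq_eq_one {m : ℕ} (hm : m ≠ 0) {c : ℝ}
    (hc : ∃ p : ℤ, c = Real.pi * p / m) :
    (exp (I * c) ^ m) ^ 2 = 1 := by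
  obtain ⟨p, rfl⟩ := hc
  rw [← pow_mul, ← exp_nat_mul]
  convert exp_int_mul_two_pi_mul_I p using 2
  push_cast
  field_simp

theorem exp_I_sub_pow_eq_exp_I_add_pow {m : ℕ} (hm : m ≠ 0) (a : ℂ) {b : ℝ}
    (hb : ∃ q : ℤ, b = Real.pi * q / m) :
    exp (I * (a - b)) ^ m = exp (I * (a + b)) ^ m := by
  have hsq := exp_I_mul_pow_sq_eq_one hm hb
  rw [mul_sub, mul_add, exp_sub, exp_add, div_pow, mul_pow, div_eq_mul_inv,
    inv_eq_of_mul_eq_one_right (a := exp (I * b) ^ m) (by rw [← sq, hsq])]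

theorem Isum_generic (m : ℕ) (hm : 0 < m) (a b : ℝ)
    (haZ : ∃ p : ℤ, a = Real.pi * p / m) (hbZ : ∃ q : ℤ, b = Real.pi * q / m)
    (ha1 : Complex.exp (Complex.I * a) ≠ 1) (ha2 : Complex.exp (Complex.I * a) ≠ -1)
    (hab : Complex.exp (Complex.I * ((a : ℂ) + b)) ≠ 1)
    (hab' : Complex.exp (Complex.I * ((a : ℂ) - b)) ≠ 1) :
    Isum m a b
      = (1 - Complex.exp (Complex.I * ((a : ℂ) + b) * m)) /
          (Complex.exp (Complex.I * a) - Complex.exp (-(Complex.I * a))) *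
        ((1 + Complex.exp (Complex.I * ((a : ℂ) + b))) /
            (1 - Complex.exp (Complex.I * ((a : ℂ) + b))) +
         (1 + Complex.exp (Complex.I * ((a : ℂ) - b))) /
            (1 - Complex.exp (Complex.I * ((a : ℂ) - b)))) := by
  have hm0 : m ≠ 0 := hm.ne'
  have hsum : ∃ r : ℤ, a + b = Real.pi * r / m := by
    obtain ⟨p, rfl⟩ := haZ
    obtain ⟨q, rfl⟩ := hbZ
    exact ⟨p + q, by push_cast; ring⟩
  have hpow : exp (I * (a + b)) ^ m = exp (I * (a + b) * m) := by
    rw [← exp_nat_mul, mul_comm]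
  have hsq : (exp (I * (a + b)) ^ m) ^ 2 = 1 := by exact_mod_cast exp_I_mul_pow_sq_eq_one hm0 hsum
  have hpow' := exp_I_sub_pow_eq_exp_I_add_pow hm0 a hbZ
  have hI := sub_inv_mul_Isum m a b
  rw [sum_Ioo_zpow_sub_inv_zpow (exp_ne_zero _) hab hm hsq,
    sum_Ioo_zpow_sub_inv_zpow (exp_ne_zero _) hab' hm (hpow' ▸ hsq), hpow', hpow] at hI
  rw [exp_neg, div_mul_eq_mul_div, eq_div_iff (sub_inv_ne_zero (exp_ne_zero _) ha1 ha2),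
    mul_comm, hI]
  ring
end

section
/- Let a, b ∈ (π/m)ℤ with e^{ia} ≠ ±1. If e^{i(a+b)} = 1 and e^{i(a-b)} ≠ 1, then I(a,b) = (1 - e^{i(a-b)m})/(e^{ia} - e^{-ia}) · (1 + e^{i(a-b)})/(1 - e^{i(a-b)}). -/
open Complex Finset

/-! Write `x = e^{ia}`. The hypothesis `e^{i(a+b)} = 1` gives `e^{ib} = x⁻¹`, and `a ∈ (π/m)ℤ`
gives `x^{2m} = 1`; hence `e^{i(a-b)m} = x^{2m} = 1` and the right-hand side vanishes. On the
left, the inner sum over `j` is a geometric progression of ratio `x²`, so that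
`(x - x⁻¹) I(a,b) = ∑_{0<k<m} (x^{2k} - x^{-2k})`, which is zero because the reflection
`k ↦ m - k` exchanges the two halves. As `x ≠ ±1`, `I(a,b) = 0`. -/

lemma sum_filter_odd_Ioo_eq_sum_range {M : Type*} [AddCommMonoid M] (f : ℤ → M) (k : ℤ) :
    ∑ j ∈ (Ioo (-k) k).filter (fun j => Odd (j + k)), f j
      = ∑ t ∈ range k.toNat, f (2 * t + 1 - k) := by
  refine sum_nbij' (fun j => ((j + k - 1) / 2).toNat) (fun t => 2 * (t : ℤ) + 1 - k)
    ?_ ?_ ?_ ?_ ?_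
  · intro j hj
    obtain ⟨⟨h1, h2⟩, c, hc⟩ := by simpa only [mem_filter, mem_Ioo] using hj
    simp only [mem_range]
    omega
  · intro t ht
    simp only [mem_range] at ht
    simp only [mem_filter, mem_Ioo]
    exact ⟨⟨by omega, by omega⟩, t, by omega⟩
  · intro j hj
    obtain ⟨⟨h1, h2⟩, c, hc⟩ := by simpa only [mem_filter, mem_Ioo] using hj
    omega
  · intro t _
    omega
  · intro j hj
    obtain ⟨⟨h1, h2⟩, c, hc⟩ := by simpa only [mem_filter, mem_Ioo] using hj
    congr 1
    omega

lemma sub_inv_mul_sum_filter_odd_Ioo_zpow {K : Type*} [Field K] {x : K} (hx : x ≠ 0)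
    {k : ℤ} (hk : 0 ≤ k) :
    (x - x⁻¹) * ∑ j ∈ (Ioo (-k) k).filter (fun j => Odd (j + k)), x ^ j = x ^ k - x ^ (-k) := by
  have step (t : ℕ) : (x - x⁻¹) * x ^ (2 * (t : ℤ) + 1 - k)
      = x ^ (2 * ((t + 1 : ℕ) : ℤ) - k) - x ^ (2 * (t : ℤ) - k) := by
    rw [show 2 * ((t + 1 : ℕ) : ℤ) - k = 2 * t + 1 - k + 1 by push_cast; ring,
      show 2 * (t : ℤ) - k = 2 * t + 1 - k - 1 by ring, zpow_add_one₀ hx, zpow_sub_one₀ hx]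
    ring
  rw [sum_filter_odd_Ioo_eq_sum_range, mul_sum, sum_congr rfl fun t _ => step t,
    sum_range_sub (fun t : ℕ => x ^ (2 * (t : ℤ) - k)), Int.toNat_of_nonneg hk]
  ring_nf

lemma sum_Ioo_zpow_sub_zpow_neg_eq_zero {K : Type*} [DivisionRing K] {w : K} (hw : w ≠ 0)
    {m : ℕ} (hwm : w ^ m = 1) :
    ∑ k ∈ Ioo (0 : ℤ) m, (w ^ k - w ^ (-k)) = 0 := by
  rw [sum_sub_distrib, sub_eq_zero]
  refine sum_nbij' (fun k => m - k) (fun k => m - k) ?_ ?_ ?_ ?_ ?_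
  · intro k hk
    simp only [mem_Ioo] at hk ⊢
    omega
  · intro k hk
    simp only [mem_Ioo] at hk ⊢
    omega
  · intro k _
    omega
  · intro k _
    omega
  · intro k _
    rw [neg_sub, zpow_sub₀ hw, zpow_natCast, hwm, div_one]

lemma sub_inv_ne_zero_s12 {K : Type*} [Field K] {x : K} (hx : x ≠ 0) (h1 : x ≠ 1) (h2 : x ≠ -1) :
    x - x⁻¹ ≠ 0 := by
  intro h
  have hsq : x * x = 1 := by
    simpa only [← sub_eq_zero.mp h] using mul_inv_cancel₀ hx
  rcases mul_self_eq_one_iff.mp hsq with h' | h' <;> contradiction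

lemma Isum_eq_sum_zpow (m : ℕ) (a b : ℂ) :
    Isum m a b = ∑ k ∈ Ioo (0 : ℤ) m, (exp (I * b) ^ k + exp (I * b) ^ (-k)) *
      ∑ j ∈ (Ioo (-k) k).filter (fun j => Odd (j + k)), exp (I * a) ^ j := by
  have exp_mul_int (c : ℂ) (n : ℤ) : exp (I * c * n) = exp (I * c) ^ n := by
    rw [mul_comm, exp_int_mul]
  have exp_neg_mul_int (n : ℤ) : exp (I * -b * n) = exp (I * b) ^ (-n) := by
    rw [exp_mul_int, mul_neg, exp_neg, inv_zpow']
  simp only [Isum, Jsum, ← sum_add_distrib, exp_neg_mul_int]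
  simp only [exp_mul_int]
  refine sum_congr rfl fun k _ => ?_
  rw [add_mul, mul_sum, mul_sum, ← sum_add_distrib]
  exact sum_congr rfl fun j _ => by ring

lemma exp_I_mul_pow_two_mul_eq_one {m : ℕ} {a : ℝ} {p : ℤ} (ha : a = Real.pi * p / m) :
    exp (I * a) ^ (2 * m) = 1 := by
  rcases eq_or_ne m 0 with rfl | hm
  · rfl
  have hm' : (m : ℂ) ≠ 0 := Nat.cast_ne_zero.mpr hm
  rw [← exp_nat_mul, ← exp_int_mul_two_pi_mul_I p, ha]
  push_cast
  field_simp

theorem Isum_sum_one_general (m : ℕ) (a b : ℝ)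
    (haZ : ∃ p : ℤ, a = Real.pi * p / m)
    (ha1 : Complex.exp (Complex.I * a) ≠ 1) (ha2 : Complex.exp (Complex.I * a) ≠ -1)
    (hab : Complex.exp (Complex.I * ((a : ℂ) + b)) = 1) :
    Isum m a b
      = (1 - Complex.exp (Complex.I * ((a : ℂ) - b) * m)) /
          (Complex.exp (Complex.I * a) - Complex.exp (-(Complex.I * a))) *
        ((1 + Complex.exp (Complex.I * ((a : ℂ) - b))) /
            (1 - Complex.exp (Complex.I * ((a : ℂ) - b)))) := by
  obtain ⟨p, hp⟩ := haZ
  set x := exp (I * a)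
  have hx : x ≠ 0 := exp_ne_zero _
  have hb : exp (I * b) = x⁻¹ :=
    (inv_eq_of_mul_eq_one_right (by rw [← exp_add, ← mul_add, hab])).symm
  have hx2m : (x ^ 2) ^ m = 1 := by
    rw [← pow_mul]
    exact exp_I_mul_pow_two_mul_eq_one hp
  have hI : Isum m a b = 0 := by
    refine (mul_eq_zero.mp ?_).resolve_left (sub_inv_ne_zero_s12 hx ha1 ha2)
    calc (x - x⁻¹) * Isum m a b
        = ∑ k ∈ Ioo (0 : ℤ) m, ((x ^ 2) ^ k - (x ^ 2) ^ (-k)) := by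
          rw [Isum_eq_sum_zpow, hb, mul_sum]
          refine sum_congr rfl fun k hk => ?_
          rw [mul_left_comm, sub_inv_mul_sum_filter_odd_Ioo_zpow hx (mem_Ioo.mp hk).1.le,
            inv_zpow', inv_zpow', neg_neg, sq, mul_zpow, mul_zpow]
          ring
      _ = 0 := sum_Ioo_zpow_sub_zpow_neg_eq_zero (pow_ne_zero 2 hx) hx2m
  have hab_sub : exp (I * (a - b)) = x ^ 2 := by
    rw [mul_sub, exp_sub, hb, div_inv_eq_mul, sq]
  rw [hI, mul_comm _ (m : ℂ), exp_nat_mul, hab_sub, hx2m, sub_self, zero_div, zero_mul]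

theorem Isum_sum_one (m : ℕ) (hm : 0 < m) (a b : ℝ)
    (haZ : ∃ p : ℤ, a = Real.pi * p / m) (hbZ : ∃ q : ℤ, b = Real.pi * q / m)
    (ha1 : Complex.exp (Complex.I * a) ≠ 1) (ha2 : Complex.exp (Complex.I * a) ≠ -1)
    (hab : Complex.exp (Complex.I * ((a : ℂ) + b)) = 1)
    (hab' : Complex.exp (Complex.I * ((a : ℂ) - b)) ≠ 1) :
    Isum m a b
      = (1 - Complex.exp (Complex.I * ((a : ℂ) - b) * m)) /
          (Complex.exp (Complex.I * a) - Complex.exp (-(Complex.I * a))) *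
        ((1 + Complex.exp (Complex.I * ((a : ℂ) - b))) /
            (1 - Complex.exp (Complex.I * ((a : ℂ) - b)))) :=
  Isum_sum_one_general m a b haZ ha1 ha2 hab
end
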